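/- Let L_m denote the Laurent polynomial ring over ℤ in m commuting variables t₁,…,t_m, and let θ̂ : L_m → ℤ[[v₁,…,v_m]] be the ring homomorphism determined by tᵢ ↦ 1 + vᵢ (well-defined since each 1 + vᵢ is a unit of the power series ring). Then: (i) θ̂ is injective; (ii) every f ∈ L_m with f(1,…,1) = 1 maps to a unit of ℤ[[v₁,…,v_m]]; and (iii) letting Σ be the submonoid of all f with f(1,…,1) = 1, the induced ring homomorphism from the localization Σ⁻¹L_m to ℤ[[v₁,…,v_m]] is injective. -/

import Mathlib

/-- The Laurent polynomial ring `L_m = ℤ[t₁^{±1},…,t_m^{±1}]`, realized as the monoid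
algebra of the free abelian group `ℤ^m` over `ℤ`. -/
abbrev MvLaurent (m : ℕ) : Type := AddMonoidAlgebra ℤ (Fin m →₀ ℤ)

/-- The generator `tᵢ` of `L_m`. -/
noncomputable def MvLaurent.t {m : ℕ} (i : Fin m) : MvLaurent m :=
  AddMonoidAlgebra.single (Finsupp.single i 1) 1

/-- The submonoid `Σ` of `L_m` consisting of all `f` with `f(1,…,1) = 1`, where `ev` is
the evaluation homomorphism sending every `tᵢ` to `1`. -/
noncomputable def mvSigmaSubmonoid {m : ℕ} (ev : MvLaurent m →+* ℤ) :
    Submonoid (MvLaurent m) where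
  carrier := {f | ev f = 1}
  one_mem' := map_one ev
  mul_mem' := by
    intro a b ha hb
    simp only [Set.mem_setOf_eq, map_mul] at *
    rw [ha, hb, mul_one]

namespace Stmt8Aux

open AddMonoidAlgebra Finsupp

variable {m : ℕ}

/-- The unit `t^a` of the Laurent ring. -/
noncomputable def lUnit (a : Fin m →₀ ℤ) : (MvLaurent m)ˣ where
  val := AddMonoidAlgebra.single a 1
  inv := AddMonoidAlgebra.single (-a) 1
  val_inv := by
    rw [AddMonoidAlgebra.single_mul_single]
    simp [AddMonoidAlgebra.one_def]
  inv_val := by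
    rw [AddMonoidAlgebra.single_mul_single]
    simp [AddMonoidAlgebra.one_def]

lemma lUnit_coe (a : Fin m →₀ ℤ) : (lUnit a : MvLaurent m) = AddMonoidAlgebra.single a 1 := rfl

lemma lUnit_add (a b : Fin m →₀ ℤ) : lUnit (a + b) = lUnit a * lUnit b := by
  ext
  simp [lUnit, AddMonoidAlgebra.single_mul_single]

/-- `t^·` as a monoid hom to the units. -/
noncomputable def lUnitHom : Multiplicative (Fin m →₀ ℤ) →* (MvLaurent m)ˣ where
  toFun a := lUnit (Multiplicative.toAdd a)
  map_one' := by ext; simp [lUnit, AddMonoidAlgebra.one_def]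
  map_mul' a b := lUnit_add _ _

/-- Ring homomorphisms out of `L_m` are determined by their values on the `tᵢ`. -/
theorem laurent_ringHom_ext {R : Type*} [Ring R] {f g : MvLaurent m →+* R}
    (h : ∀ i, f (MvLaurent.t i) = g (MvLaurent.t i)) : f = g := by
  apply AddMonoidAlgebra.ringHom_ext
  · intro b
    have h1 : (AddMonoidAlgebra.single (0 : Fin m →₀ ℤ) b : MvLaurent m) = b • 1 := by
      rw [AddMonoidAlgebra.one_def]
      simp
    rw [h1, map_zsmul, map_zsmul, map_one, map_one]
  · intro a
    let F : Multiplicative (Fin m →₀ ℤ) →* Rˣ :=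
      (Units.map (f : MvLaurent m →* R)).comp lUnitHom
    let G : Multiplicative (Fin m →₀ ℤ) →* Rˣ :=
      (Units.map (g : MvLaurent m →* R)).comp lUnitHom
    have hFG : F = G := by
      have : MonoidHom.toAdditiveRight F = MonoidHom.toAdditiveRight G := by
        apply Finsupp.addHom_ext'
        intro i
        apply AddMonoidHom.ext_int
        apply Additive.toMul.injective
        apply Units.ext
        simpa [F, G, lUnitHom, lUnit_coe, MvLaurent.t] using h i
      exact MonoidHom.toAdditiveRight.injective this
    have : (F (Multiplicative.ofAdd a) : R) = (G (Multiplicative.ofAdd a) : R) := by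
      rw [hFG]
    simpa [F, G, lUnitHom, lUnit_coe] using this

/-- Inclusion of exponents. -/
noncomputable def expInc : (Fin m →₀ ℕ) →+ (Fin m →₀ ℤ) :=
  Finsupp.mapRange.addMonoidHom (Nat.castAddMonoidHom ℤ)

/-- The inclusion `ℤ[x₁,…,x_m] → L_m`. -/
noncomputable def iota (m : ℕ) : MvPolynomial (Fin m) ℤ →+* MvLaurent m :=
  AddMonoidAlgebra.mapDomainRingHom ℤ (expInc (m := m))

lemma iota_monomial (n : Fin m →₀ ℕ) (b : ℤ) :
    iota m (MvPolynomial.monomial n b) = AddMonoidAlgebra.single (expInc n) b := by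
  show AddMonoidAlgebra.mapDomain _ _ = _
  rw [← MvPolynomial.single_eq_monomial, AddMonoidAlgebra.mapDomain_single]

/-- Truncation of exponents. -/
noncomputable def expTrunc (c : Fin m →₀ ℤ) : Fin m →₀ ℕ :=
  Finsupp.mapRange Int.toNat (by simp) c

lemma expInc_expTrunc {c : Fin m →₀ ℤ} (hc : ∀ i, 0 ≤ c i) : expInc (expTrunc c) = c := by
  ext i
  simp [expInc, expTrunc, Int.toNat_of_nonneg (hc i)]

/-- The negative-part vector of an exponent vector. -/
noncomputable def negPart (a : Fin m →₀ ℤ) : Fin m →₀ ℤ :=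
  Finsupp.mapRange (fun n => max (-n) 0) (by simp) a

lemma negPart_nonneg (a : Fin m →₀ ℤ) (i : Fin m) : 0 ≤ negPart a i := by
  simp [negPart]

lemma add_negPart_nonneg (a : Fin m →₀ ℤ) (i : Fin m) : 0 ≤ a i + negPart a i := by
  simp only [negPart, Finsupp.mapRange_apply]
  rcases le_total (a i) 0 with h | h
  · simp [max_eq_left (by linarith : (0:ℤ) ≤ -(a i))]
  · have : max (-(a i)) 0 = 0 := max_eq_right (by linarith)
    rw [this]; linarith

/-- Every Laurent polynomial becomes polynomial after multiplying by a monomial. -/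
lemma exists_rep (f : MvLaurent m) : ∃ (p : MvPolynomial (Fin m) ℤ) (d : Fin m →₀ ℤ),
    (∀ i, 0 ≤ d i) ∧ iota m p = f * AddMonoidAlgebra.single d 1 := by
  induction f using AddMonoidAlgebra.induction with
  | zero => exact ⟨0, 0, fun i => le_refl 0, by simp⟩
  | single_add a b f ha hb ih =>
    obtain ⟨p', d', hd', hp'⟩ := ih
    refine ⟨p' * MvPolynomial.monomial (expTrunc (negPart a)) 1 +
        MvPolynomial.monomial (expTrunc (a + negPart a + d')) b, negPart a + d',
        fun i => add_nonneg (negPart_nonneg a i) (hd' i), ?_⟩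
    have hnn : ∀ i, 0 ≤ (a + negPart a + d') i := by
      intro i
      simp only [Finsupp.add_apply]
      exact add_nonneg (add_negPart_nonneg a i) (hd' i)
    rw [map_add, map_mul, hp', iota_monomial, iota_monomial, expInc_expTrunc (negPart_nonneg a),
      expInc_expTrunc hnn]
    simp only [add_mul, mul_assoc, AddMonoidAlgebra.single_mul_single, mul_one, one_mul]
    rw [add_comm d' (negPart a), add_assoc a]
    ring

end Stmt8Aux

open Stmt8Aux in
/-- (i) `θ̂ : L_m → ℤ[[v₁,…,v_m]]`, `tᵢ ↦ 1 + vᵢ`, is injective; (ii) every `f` with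
`f(1,…,1) = 1` maps to a unit; (iii) the induced map on the localization `Σ⁻¹L_m` is
injective. -/
theorem stmt_8 (m : ℕ) (θ : MvLaurent m →+* MvPowerSeries (Fin m) ℤ)
    (hθ : ∀ i : Fin m, θ (MvLaurent.t i) = 1 + MvPowerSeries.X i)
    (ev : MvLaurent m →+* ℤ) (hev : ∀ i : Fin m, ev (MvLaurent.t i) = 1) :
    Function.Injective θ ∧
    ∃ h : ∀ y : mvSigmaSubmonoid ev, IsUnit (θ (y : MvLaurent m)),
      Function.Injective
        ⇑(IsLocalization.lift (M := mvSigmaSubmonoid ev)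
            (S := Localization (mvSigmaSubmonoid ev)) (g := θ) h) := by
  classical
  -- the shift automorphism of the polynomial ring
  let shift : MvPolynomial (Fin m) ℤ →ₐ[ℤ] MvPolynomial (Fin m) ℤ :=
    MvPolynomial.aeval (fun i => MvPolynomial.X i + 1)
  let shiftInv : MvPolynomial (Fin m) ℤ →ₐ[ℤ] MvPolynomial (Fin m) ℤ :=
    MvPolynomial.aeval (fun i => MvPolynomial.X i - 1)
  have hleft : ∀ p, shiftInv (shift p) = p := by
    have : shiftInv.comp shift = AlgHom.id ℤ _ := by
      apply MvPolynomial.algHom_ext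
      intro i
      simp [shift, shiftInv]
    intro p
    exact congrArg (fun F => F p) (congrArg DFunLike.coe this) |>.trans rfl
  have hshift_inj : Function.Injective shift := Function.LeftInverse.injective hleft
  -- θ ∘ ι = (coe to power series) ∘ shift
  have hcomp : θ.comp (iota m) =
      MvPolynomial.coeToMvPowerSeries.ringHom.comp shift.toRingHom := by
    apply MvPolynomial.ringHom_ext
    · intro a
      have h1 : (θ.comp (iota m)).comp MvPolynomial.C =
          (MvPolynomial.coeToMvPowerSeries.ringHom.comp shift.toRingHom).comp MvPolynomial.C :=
        Subsingleton.elim _ _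
      exact RingHom.congr_fun h1 a
    · intro i
      have hX : iota m (MvPolynomial.X i) = MvLaurent.t i := by
        rw [show (MvPolynomial.X i : MvPolynomial (Fin m) ℤ) =
          MvPolynomial.monomial (Finsupp.single i 1) 1 from rfl, iota_monomial]
        rw [MvLaurent.t]
        congr 1
        simp [expInc]
      rw [RingHom.comp_apply, RingHom.comp_apply, hX, hθ]
      have : shift.toRingHom (MvPolynomial.X i) = MvPolynomial.X i + 1 := by
        simp [shift]
      rw [this, map_add, map_one, MvPolynomial.coeToMvPowerSeries.ringHom_apply,
        MvPolynomial.coe_X, add_comm]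
  -- (i) injectivity of θ
  have hinj : Function.Injective θ := by
    rw [injective_iff_map_eq_zero]
    intro f hf
    obtain ⟨p, d, hd, hp⟩ := exists_rep f
    have h1 : θ (iota m p) = 0 := by
      rw [hp, map_mul, hf, zero_mul]
    have h2 : (MvPolynomial.coeToMvPowerSeries.ringHom (shift.toRingHom p)) = 0 := by
      have hc := RingHom.congr_fun hcomp p
      rw [RingHom.comp_apply, RingHom.comp_apply] at hc
      rw [← hc]
      exact h1
    have h3 : shift p = 0 := by simpa using h2
    have h4 : p = 0 := hshift_inj (by rw [h3, map_zero])
    have h5 : f * AddMonoidAlgebra.single d 1 = 0 := by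
      rw [← hp, h4, map_zero]
    have := (Units.mul_left_eq_zero (lUnit d)).mp (by rw [lUnit_coe]; exact h5)
    exact this
  -- constant coefficient of θ f is ev f
  have hconst : (MvPowerSeries.constantCoeff (σ := Fin m) (R := ℤ)).comp θ = ev := by
    apply laurent_ringHom_ext
    intro i
    rw [RingHom.comp_apply, hθ, hev]
    simp
  -- (ii) units
  have hu : ∀ y : mvSigmaSubmonoid ev, IsUnit (θ (y : MvLaurent m)) := by
    intro y
    rw [MvPowerSeries.isUnit_iff_constantCoeff]
    have : MvPowerSeries.constantCoeff (σ := Fin m) (R := ℤ) (θ (y : MvLaurent m)) = ev y :=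
      RingHom.congr_fun hconst y
    rw [this, y.2]
    exact isUnit_one
  refine ⟨hinj, hu, ?_⟩
  -- (iii) injectivity of the induced map
  rw [IsLocalization.lift_injective_iff]
  intro x y
  constructor
  · intro hxy
    obtain ⟨c, hc⟩ := (IsLocalization.eq_iff_exists (mvSigmaSubmonoid ev)
      (Localization (mvSigmaSubmonoid ev))).mp hxy
    have : θ c * θ x = θ c * θ y := by
      rw [← map_mul, ← map_mul, hc]
    exact (hu c).mul_left_cancel this
  · intro hxy
    exact congrArg _ (hinj hxy)
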